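/- arXiv:2603.01793 — 3 statements merged into one kernel-verified Lean document; each statement's English description precedes it below -/
import Mathlib

section
/- Let k be a positive integer and Q(y) = 2·arctan(y^k). For every twice differentiable function g : (0,∞) → ℝ define (A g)(y) := −g'(y) + (k·cos(Q(y))/y)·g(y) and, for a differentiable h, (A* h)(y) := h'(y) + ((1 + k·cos(Q(y)))/y)·h(y). Then for every y > 0 the factorization identity A*(A g)(y) = −g''(y) − g'(y)/y + (k²·cos(2·Q(y))/y²)·g(y) holds; that is, the linearized operator H = −∂_yy − y^{-1}∂_y + k²·cos(2Q)/y² around Q factorizes as H = A*A. -/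
/-!
The profile `Q` solves the Bogomolny equation `y Q' = k sin Q` (since `sin (2 arctan t) = 2t/(1+t²)`).
For any such `θ`, the derivative of the potential `k cos θ / y` is `-(k² sin² θ + k cos θ)/y²`, so in
`A*(A g)` the first-order terms collapse to `-g'/y` and the zeroth-order ones to
`k² (cos² θ - sin² θ)/y² = k² cos (2θ)/y²`.
-/

/-- The ground-state `k`-equivariant harmonic map profile `Q(r) = 2 arctan(r^k)`. -/
noncomputable def Q (k : ℕ) (r : ℝ) : ℝ := 2 * Real.arctan (r ^ k)

open Real

theorem Real.sin_two_mul_arctan (t : ℝ) : sin (2 * arctan t) = 2 * t / (1 + t ^ 2) := by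
  have hsin : sin (arctan t) = t * cos (arctan t) := by
    rw [← tan_mul_cos (cos_arctan_pos t).ne', tan_arctan]
  rw [sin_two_mul, hsin]
  linear_combination (2 * t) * cos_sq_arctan t

theorem factorization_of_hasDerivAt_eq_mul_sin_div {θ g : ℝ → ℝ} {k y : ℝ} (hy : y ≠ 0)
    (hθ : HasDerivAt θ (k * sin (θ y) / y) y)
    (hg : DifferentiableAt ℝ g y) (hg' : DifferentiableAt ℝ (deriv g) y) :
    deriv (fun z => -deriv g z + (k * cos (θ z) / z) * g z) y
        + ((1 + k * cos (θ y)) / y) * (-deriv g y + (k * cos (θ y) / y) * g y)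
      = -deriv (deriv g) y - deriv g y / y + (k ^ 2 * cos (2 * θ y) / y ^ 2) * g y := by
  have hpotential : HasDerivAt (fun z => k * cos (θ z) / z)
      (-(k ^ 2 * sin (θ y) ^ 2 + k * cos (θ y)) / y ^ 2) y :=
    ((((hasDerivAt_cos (θ y)).comp y hθ).const_mul k).div (hasDerivAt_id y) hy).congr_deriv
      (by simp only [id, Function.comp_apply]; field_simp; ring)
  have hAg : HasDerivAt (fun z => -deriv g z + (k * cos (θ z) / z) * g z)
      (-deriv (deriv g) y + (-(k ^ 2 * sin (θ y) ^ 2 + k * cos (θ y)) / y ^ 2 * g y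
        + k * cos (θ y) / y * deriv g y)) y :=
    hg'.hasDerivAt.neg.add (hpotential.mul hg.hasDerivAt)
  rw [hAg.deriv, cos_two_mul]
  field_simp
  linear_combination (-k ^ 2 * g y) * sin_sq_add_cos_sq (θ y)

theorem hasDerivAt_Q (k : ℕ) {y : ℝ} (hy : 0 < y) :
    HasDerivAt (Q k) (k * sin (Q k y) / y) y := by
  have hpow : HasDerivAt (fun z : ℝ => z ^ k) (k * y ^ k / y) y := by
    refine (hasDerivAt_pow k y).congr_deriv ?_
    rcases k.eq_zero_or_pos with rfl | hk
    · simp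
    · rw [← Nat.sub_add_cancel hk, pow_succ, Nat.add_sub_cancel]
      field_simp
  refine (((hasDerivAt_arctan _).comp y hpow).const_mul 2).congr_deriv ?_
  rw [Q, sin_two_mul_arctan]
  field_simp

theorem stmt_3_general (k : ℕ) (g : ℝ → ℝ)
    (hg : ∀ y : ℝ, 0 < y → DifferentiableAt ℝ g y)
    (hg' : ∀ y : ℝ, 0 < y → DifferentiableAt ℝ (deriv g) y)
    (y : ℝ) (hy : 0 < y) :
    deriv (fun z => -deriv g z + (k * Real.cos (Q k z) / z) * g z) y
        + ((1 + k * Real.cos (Q k y)) / y) *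
            (-deriv g y + (k * Real.cos (Q k y) / y) * g y)
      = -deriv (deriv g) y - deriv g y / y
          + ((k : ℝ) ^ 2 * Real.cos (2 * Q k y) / y ^ 2) * g y :=
  factorization_of_hasDerivAt_eq_mul_sin_div hy.ne' (hasDerivAt_Q k hy) (hg y hy) (hg' y hy)

/-- The factorization `H = A*A` of the linearized operator around `Q`:
for every twice differentiable `g` on `(0,∞)` and every `y > 0`,
`A*(A g)(y) = -g''(y) - g'(y)/y + (k² cos(2Q(y))/y²) g(y)`, where
`(A g)(y) = -g'(y) + (k cos(Q(y))/y) g(y)` and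
`(A* h)(y) = h'(y) + ((1 + k cos(Q(y)))/y) h(y)`. -/
theorem stmt_3 (k : ℕ) (hk : 0 < k) (g : ℝ → ℝ)
    (hg : ∀ y : ℝ, 0 < y → DifferentiableAt ℝ g y)
    (hg' : ∀ y : ℝ, 0 < y → DifferentiableAt ℝ (deriv g) y)
    (y : ℝ) (hy : 0 < y) :
    deriv (fun z => -deriv g z + (k * Real.cos (Q k z) / z) * g z) y
        + ((1 + k * Real.cos (Q k y)) / y) *
            (-deriv g y + (k * Real.cos (Q k y) / y) * g y)
      = -deriv (deriv g) y - deriv g y / y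
          + ((k : ℝ) ^ 2 * Real.cos (2 * Q k y) / y ^ 2) * g y :=
  stmt_3_general k g hg hg' y hy
end

section
/- Let k ≥ 3 be an integer, J a positive integer, and κ > 0 a real number. Define α_j := (k/(k−2))^{j−1} − 1 for j = 1, …, J, and γ_1 := 1, γ_j := ( κ·α_j·(α_j + 1)/(8k²) )^{1/(k−2)} · γ_{j−1}^{k/(k−2)} for j = 2, …, J. For t < 0 set λ_j(t) := γ_j·(−t)^{−α_j} and b_j(t) := −α_j·γ_j·(−t)^{−(α_j + 1)}. Then for every t < 0: (i) λ_j'(t) = −b_j(t) for every j ∈ {1, …, J}; (ii) b_1'(t) = 0; and (iii) for every j ∈ {2, …, J}, b_j'(t) = −(8k²/κ)·λ_j(t)^{k−1}/λ_{j−1}(t)^k. In other words, (λ_j, b_j)_{j=1}^J is an exact solution of the formal modulation ODE system λ_{j,t} = −b_j, b_{j,t} = −8k²·κ^{−1}·λ_j^{k−1}/λ_{j−1}^k·1_{j ≥ 2}. -/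
/-!
Every `λ_j` and `b_j` is a constant times a power of `-t`, so both equations reduce to matching
exponents and constants. The exponents match because `(k - 2)(α_j + 1) = k(α_{j-1} + 1)`, and the
constants match because raising the recursion for `γ_j` to the power `k - 2` gives
`γ_j^{k-2} = κ α_j (α_j + 1) / (8k²) · γ_{j-1}^k`.
-/

open Real

lemma hasDerivAt_const_mul_neg_rpow_neg {t : ℝ} (ht : t ≠ 0) (c p : ℝ) :
    HasDerivAt (fun s : ℝ => c * (-s) ^ (-p)) (p * c * (-t) ^ (-(p + 1))) t := by
  refine (((hasDerivAt_neg t).rpow_const (Or.inl (neg_ne_zero.mpr ht))).const_mul c).congr_deriv ?_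
  rw [show -(p + 1) = -p - 1 by ring]
  ring

lemma sub_two_mul_pow_succ {k : ℝ} (hk : k ≠ 2) (n : ℕ) :
    (k - 2) * (k / (k - 2)) ^ (n + 1) = k * (k / (k - 2)) ^ n := by
  have : k - 2 ≠ 0 := sub_ne_zero.mpr hk
  rw [pow_succ]
  field_simp

lemma pos_of_rpow_recursion {J : ℕ} {γ C : ℕ → ℝ} {a b : ℝ} (h1 : 0 < γ 1)
    (hC : ∀ j, 2 ≤ j → j ≤ J → 0 < C j)
    (hγ : ∀ j, 2 ≤ j → j ≤ J → γ j = C j ^ a * γ (j - 1) ^ b) :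
    ∀ j, 1 ≤ j → j ≤ J → 0 < γ j := by
  intro j hj
  induction j, hj using Nat.le_induction with
  | base => exact fun _ => h1
  | succ n hn ih =>
    intro hnJ
    rw [hγ (n + 1) (by omega) hnJ, Nat.add_sub_cancel]
    exact mul_pos (rpow_pos_of_pos (hC _ (by omega) hnJ) a) (rpow_pos_of_pos (ih (by omega)) b)

lemma rpow_recursion_pow {C γ : ℝ} (hC : 0 ≤ C) (hγ : 0 ≤ γ) {k : ℕ} (hk : 2 < k) :
    (C ^ ((1 : ℝ) / ((k : ℝ) - 2)) * γ ^ ((k : ℝ) / ((k : ℝ) - 2))) ^ (k - 2) = C * γ ^ k := by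
  have hk2 : (k : ℝ) - 2 ≠ 0 := by
    have : (2 : ℝ) < k := by exact_mod_cast hk
    linarith
  rw [← rpow_natCast, Nat.cast_sub hk.le, Nat.cast_ofNat,
    mul_rpow (rpow_nonneg hC _) (rpow_nonneg hγ _), ← rpow_mul hC, ← rpow_mul hγ,
    div_mul_cancel₀ _ hk2, div_mul_cancel₀ _ hk2, rpow_one, rpow_natCast]

lemma modulation_identity {k : ℕ} (hk : 2 ≤ k) {s κ α α' γ γ' : ℝ} (hs : 0 < s)
    (hκ : κ ≠ 0) (hγ' : γ' ≠ 0)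
    (hexp : ((k : ℝ) - 2) * (α + 1) = k * (α' + 1))
    (hrec : γ ^ (k - 2) = κ * α * (α + 1) / (8 * (k : ℝ) ^ 2) * γ' ^ k) :
    (α + 1) * (-α * γ) * s ^ (-(α + 1 + 1)) =
      -(8 * (k : ℝ) ^ 2 / κ) * (γ * s ^ (-α)) ^ (k - 1) / (γ' * s ^ (-α')) ^ k := by
  have hpow : ∀ (x : ℝ) (n : ℕ), (s ^ x) ^ n = s ^ (x * n) := fun x n => by
    rw [← rpow_natCast, ← rpow_mul hs.le]
  have hsplit : s ^ (-(α + 1 + 1)) * s ^ (-α' * k) = s ^ (-α * ((k - 1 : ℕ) : ℝ)) := by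
    rw [← rpow_add hs, Nat.cast_sub (by omega), Nat.cast_one]
    congr 1
    linear_combination hexp
  have hk0 : (k : ℝ) ≠ 0 := by positivity
  rw [mul_pow, mul_pow, hpow, hpow, ← hsplit, show k - 1 = k - 2 + 1 by omega,
    pow_succ γ, hrec]
  field_simp

/-- The scales `λ_j(t) = γ_j |t|^{-α_j}` and `b_j(t) = -α_j γ_j |t|^{-(α_j+1)}`, with
`α_j = (k/(k-2))^{j-1} - 1` and `γ_1 = 1`,
`γ_j = (κ α_j (α_j+1)/(8k²))^{1/(k-2)} γ_{j-1}^{k/(k-2)}`, form an exact solution of the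
formal modulation ODE system `λ_{j,t} = -b_j`, `b_{j,t} = -8k² κ⁻¹ λ_j^{k-1}/λ_{j-1}^k 1_{j≥2}`
for `t < 0`. -/
theorem stmt_14 (k J : ℕ) (hk : 3 ≤ k) (hJ : 1 ≤ J) (κ : ℝ) (hκ : 0 < κ)
    (α γ : ℕ → ℝ)
    (hα : ∀ j, 1 ≤ j → j ≤ J → α j = ((k : ℝ) / ((k : ℝ) - 2)) ^ (j - 1) - 1)
    (hγ1 : γ 1 = 1)
    (hγ : ∀ j, 2 ≤ j → j ≤ J →
      γ j = (κ * α j * (α j + 1) / (8 * (k : ℝ) ^ 2)) ^ ((1 : ℝ) / ((k : ℝ) - 2)) *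
              γ (j - 1) ^ ((k : ℝ) / ((k : ℝ) - 2)))
    (lam b : ℕ → ℝ → ℝ)
    (hlam : ∀ j t, lam j t = γ j * (-t) ^ (-(α j)))
    (hb : ∀ j t, b j t = -(α j) * γ j * (-t) ^ (-(α j + 1))) :
    ∀ t < (0 : ℝ), ∀ j, 1 ≤ j → j ≤ J →
      HasDerivAt (lam j) (-(b j t)) t ∧
      (j = 1 → HasDerivAt (b 1) 0 t) ∧
      (2 ≤ j → HasDerivAt (b j)
        (-(8 * (k : ℝ) ^ 2 / κ) * (lam j t) ^ (k - 1) / (lam (j - 1) t) ^ k) t) := by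
  have hk3 : (3 : ℝ) ≤ k := by exact_mod_cast hk
  have hαpos : ∀ j, 2 ≤ j → j ≤ J → 0 < α j := fun j hj hjJ => by
    rw [hα j (by omega) hjJ, sub_pos]
    exact one_lt_pow₀ ((one_lt_div (by linarith)).mpr (by linarith)) (by omega)
  have hCpos : ∀ j, 2 ≤ j → j ≤ J → 0 < κ * α j * (α j + 1) / (8 * (k : ℝ) ^ 2) :=
    fun j hj hjJ => by have := hαpos j hj hjJ; positivity
  have hγpos := pos_of_rpow_recursion (hγ1 ▸ one_pos) hCpos hγ
  intro t ht j hj1 hjJ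
  refine ⟨?_, fun _ => ?_, fun hj2 => ?_⟩
  · rw [funext (hlam j)]
    refine (hasDerivAt_const_mul_neg_rpow_neg ht.ne (γ j) (α j)).congr_deriv ?_
    rw [hb]
    ring
  · have hb1 : b 1 = fun _ => 0 := funext fun s => by simp [hb, hα 1 le_rfl hJ]
    exact hb1 ▸ hasDerivAt_const t 0
  · have hexp : ((k : ℝ) - 2) * (α j + 1) = k * (α (j - 1) + 1) := by
      rw [hα j (by omega) hjJ, hα (j - 1) (by omega) (by omega), sub_add_cancel, sub_add_cancel,
        show j - 1 = j - 1 - 1 + 1 by omega, Nat.add_sub_cancel]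
      exact sub_two_mul_pow_succ (by linarith) _
    have hrec : γ j ^ (k - 2) = κ * α j * (α j + 1) / (8 * (k : ℝ) ^ 2) * γ (j - 1) ^ k := by
      rw [hγ j hj2 hjJ]
      exact rpow_recursion_pow (hCpos j hj2 hjJ).le (hγpos (j - 1) (by omega) (by omega)).le hk
    rw [funext (hb j), hlam, hlam]
    exact (hasDerivAt_const_mul_neg_rpow_neg ht.ne _ _).congr_deriv
      (modulation_identity (by omega) (neg_pos.mpr ht) hκ.ne'
        (hγpos (j - 1) (by omega) (by omega)).ne' hexp hrec)
end

section
/- For every positive integer J there exists a constant C > 0, depending only on J, such that for all real numbers a_1, …, a_J: |sin(2·(a_1 + a_2 + ⋯ + a_J)) − Σ_{j=1}^J sin(2·a_j)| ≤ C·Σ_{1 ≤ i < j ≤ J} |sin a_i|·|sin a_j|. -/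
open Real Finset

lemma sin2_ident (x y : ℝ) :
    Real.sin (2*(x+y)) - Real.sin (2*x) - Real.sin (2*y)
      = -4 * Real.sin (x+y) * Real.sin x * Real.sin y := by
  rw [Real.sin_two_mul, Real.sin_two_mul, Real.sin_two_mul, Real.sin_add, Real.cos_add]
  linear_combination (2*Real.sin x*Real.cos x) * (Real.sin_sq_add_cos_sq y)
    + (2*Real.sin y*Real.cos y) * (Real.sin_sq_add_cos_sq x)

lemma abs_sin_add (x y : ℝ) : |Real.sin (x+y)| ≤ |Real.sin x| + |Real.sin y| := by
  rw [Real.sin_add]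
  calc |Real.sin x * Real.cos y + Real.cos x * Real.sin y|
      ≤ |Real.sin x * Real.cos y| + |Real.cos x * Real.sin y| := abs_add_le _ _
    _ ≤ |Real.sin x| + |Real.sin y| := by
        rw [abs_mul, abs_mul]
        gcongr
        · calc |Real.sin x| * |Real.cos y| ≤ |Real.sin x| * 1 := by
                gcongr; exact Real.abs_cos_le_one y
            _ = |Real.sin x| := mul_one _
        · calc |Real.cos x| * |Real.sin y| ≤ 1 * |Real.sin y| := by
                gcongr; exact Real.abs_cos_le_one x
            _ = |Real.sin y| := one_mul _

lemma abs_sin_sum (a : ℕ → ℝ) (n : ℕ) :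
    |Real.sin (∑ j ∈ Finset.range n, a j)| ≤ ∑ j ∈ Finset.range n, |Real.sin (a j)| := by
  induction n with
  | zero => simp
  | succ n ih =>
    rw [Finset.sum_range_succ, Finset.sum_range_succ]
    exact (abs_sin_add _ _).trans (by gcongr)

lemma key (a : ℕ → ℝ) (n : ℕ) :
    |Real.sin (2 * ∑ j ∈ Finset.range n, a j) - ∑ j ∈ Finset.range n, Real.sin (2 * a j)|
      ≤ 4 * ∑ i ∈ Finset.range n, ∑ j ∈ Finset.range n,
          (if i < j then |Real.sin (a i)| * |Real.sin (a j)| else 0) := by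
  induction n with
  | zero => simp
  | succ n ih =>
    set s := ∑ j ∈ Finset.range n, a j with hs
    have hsplit : ∀ i, ∑ j ∈ Finset.range (n+1),
        (if i < j then |Real.sin (a i)| * |Real.sin (a j)| else 0)
        = (∑ j ∈ Finset.range n, (if i < j then |Real.sin (a i)| * |Real.sin (a j)| else 0))
          + (if i < n then |Real.sin (a i)| * |Real.sin (a n)| else 0) :=
      fun i => Finset.sum_range_succ _ n
    have hR : ∑ i ∈ Finset.range (n+1), ∑ j ∈ Finset.range (n+1),
          (if i < j then |Real.sin (a i)| * |Real.sin (a j)| else 0)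
        = (∑ i ∈ Finset.range n, ∑ j ∈ Finset.range n,
            (if i < j then |Real.sin (a i)| * |Real.sin (a j)| else 0))
          + ∑ i ∈ Finset.range n, |Real.sin (a i)| * |Real.sin (a n)| := by
      rw [Finset.sum_range_succ]
      simp only [hsplit]
      rw [Finset.sum_add_distrib]
      have h1 : ∑ j ∈ Finset.range n,
          (if n < j then |Real.sin (a n)| * |Real.sin (a j)| else 0) = 0 := by
        apply Finset.sum_eq_zero
        intro j hj
        simp [Nat.not_lt.mpr (le_of_lt (Finset.mem_range.mp hj))]
      have h2 : ∀ i ∈ Finset.range n,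
          (if i < n then |Real.sin (a i)| * |Real.sin (a n)| else 0)
            = |Real.sin (a i)| * |Real.sin (a n)| := by
        intro i hi; simp [Finset.mem_range.mp hi]
      rw [Finset.sum_congr rfl h2, h1]
      simp [if_neg (lt_irrefl n)]
    rw [Finset.sum_range_succ a, Finset.sum_range_succ (fun j => Real.sin (2 * a j)), hR]
    have hkey : Real.sin (2*(s + a n)) - (∑ j ∈ Finset.range n, Real.sin (2*a j) + Real.sin (2*a n))
        = (Real.sin (2*(s+a n)) - Real.sin (2*s) - Real.sin (2*a n))
          + (Real.sin (2*s) - ∑ j ∈ Finset.range n, Real.sin (2*a j)) := by ring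
    calc |Real.sin (2*(s + a n)) - (∑ j ∈ Finset.range n, Real.sin (2*a j) + Real.sin (2*a n))|
        ≤ |Real.sin (2*(s+a n)) - Real.sin (2*s) - Real.sin (2*a n)|
          + |Real.sin (2*s) - ∑ j ∈ Finset.range n, Real.sin (2*a j)| := by
          rw [hkey]; exact abs_add_le _ _
      _ ≤ 4 * (|Real.sin s| * |Real.sin (a n)|)
          + 4 * ∑ i ∈ Finset.range n, ∑ j ∈ Finset.range n,
              (if i < j then |Real.sin (a i)| * |Real.sin (a j)| else 0) := by
          gcongr
          rw [sin2_ident]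
          rw [abs_mul, abs_mul, abs_mul]
          have h1 : |(-4 : ℝ)| = 4 := by norm_num
          rw [h1]
          have := Real.abs_sin_le_one (s + a n)
          nlinarith [abs_nonneg (Real.sin s), abs_nonneg (Real.sin (a n)),
            mul_nonneg (abs_nonneg (Real.sin s)) (abs_nonneg (Real.sin (a n)))]
      _ ≤ 4 * ((∑ i ∈ Finset.range n, |Real.sin (a i)|) * |Real.sin (a n)|)
          + 4 * ∑ i ∈ Finset.range n, ∑ j ∈ Finset.range n,
              (if i < j then |Real.sin (a i)| * |Real.sin (a j)| else 0) := by
          gcongr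
          · exact abs_sin_sum a n
      _ = 4 * ((∑ i ∈ Finset.range n, ∑ j ∈ Finset.range n,
              (if i < j then |Real.sin (a i)| * |Real.sin (a j)| else 0))
            + ∑ i ∈ Finset.range n, |Real.sin (a i)| * |Real.sin (a n)|) := by
          rw [Finset.sum_mul]; ring

/-- Elementary trigonometric sum inequality: for every positive integer `J` there is a
constant `C = C(J) > 0` such that for all reals `a_1, …, a_J`,
`|sin(2 Σ_j a_j) - Σ_j sin(2 a_j)| ≤ C Σ_{i < j} |sin a_i| |sin a_j|`. -/
theorem stmt_17 (J : ℕ) (hJ : 0 < J) :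
    ∃ C > (0 : ℝ), ∀ a : Fin J → ℝ,
      |Real.sin (2 * ∑ j, a j) - ∑ j, Real.sin (2 * a j)| ≤
        C * ∑ i : Fin J, ∑ j : Fin J,
              (if i < j then |Real.sin (a i)| * |Real.sin (a j)| else 0) := by
  refine ⟨4, by norm_num, fun a => ?_⟩
  set b : ℕ → ℝ := fun n => if h : n < J then a ⟨n, h⟩ else 0 with hb
  have hab : ∀ j : Fin J, a j = b j.val := by
    intro j; simp [hb, j.isLt]
  have h1 : ∑ j, a j = ∑ j ∈ Finset.range J, b j := by
    rw [← Fin.sum_univ_eq_sum_range]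
    exact Finset.sum_congr rfl fun j _ => hab j
  have h2 : ∑ j, Real.sin (2 * a j) = ∑ j ∈ Finset.range J, Real.sin (2 * b j) := by
    rw [← Fin.sum_univ_eq_sum_range (fun j => Real.sin (2 * b j))]
    exact Finset.sum_congr rfl fun j _ => by rw [hab j]
  have h3 : ∑ i : Fin J, ∑ j : Fin J,
        (if i < j then |Real.sin (a i)| * |Real.sin (a j)| else 0)
      = ∑ i ∈ Finset.range J, ∑ j ∈ Finset.range J,
          (if i < j then |Real.sin (b i)| * |Real.sin (b j)| else 0) := by
    rw [← Fin.sum_univ_eq_sum_range (fun i => ∑ j ∈ Finset.range J,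
      (if i < j then |Real.sin (b i)| * |Real.sin (b j)| else 0))]
    refine Finset.sum_congr rfl fun i _ => ?_
    rw [← Fin.sum_univ_eq_sum_range (fun j => if (i:ℕ) < j then |Real.sin (b i)| * |Real.sin (b j)| else 0)]
    refine Finset.sum_congr rfl fun j _ => ?_
    rw [← hab i, ← hab j]
    congr 1
  rw [h1, h2, h3]
  exact key b J
end
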